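/- Define α_{2n} = (-1)^n q^{n^2-n} (1-q^{4n+2})/(1-q^2), α_{2n+1} = 0, and β_n = (-q;q)_n q^{n(n-1)/2} / (q^2;q)_{2n}. Then for every n≥0, β_n = Σ_{r=0}^n α_r / ((q;q)_{n-r} (q^3;q)_{n+r}). -/

import Mathlib

open scoped BigOperators

/-- Finite q-Pochhammer symbol `(x;q)_n = ∏_{k=0}^{n-1} (1 - x qᵏ)`. -/
noncomputable def poch (x q : ℂ) (n : ℕ) : ℂ := ∏ k ∈ Finset.range n, (1 - x * q ^ k)

/-- Infinite q-Pochhammer symbol `(x;q)_∞ = ∏_{k≥0} (1 - x qᵏ)`. -/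
noncomputable def pochInf (x q : ℂ) : ℂ := ∏' k : ℕ, (1 - x * q ^ k)

/-! Only the terms `r = 2m` contribute; write `F(n, m)` (`slaterSummand`) for the term `r = 2m`.
With `c n = β (n+1) / β n = qⁿ / ((1 - q^(n+1)) (1 - q^(2n+3)))` (`slaterStep`) and the rational
certificate `R(n, m)` (`slaterCert`), the functions `F` and `G(n, m) = R(n, m) F(n+1, m)` form a WZ
pair: `F(n+1, m) - c n * F(n, m) = G(n, m+1) - G(n, m)`. Once `F(n, m)` and `F(n+1, m+1)` are
written as rational multiples of `F(n+1, m)` this is a rational identity in `q`. Summing over `m`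
telescopes (`G(n, 0) = 0 = G(n, n+2)`), so `∑ₘ F(n, m)` obeys the same first-order recurrence as
`β n`, and both equal `1` at `n = 0`. -/

lemma poch_zero (x q : ℂ) : poch x q 0 = 1 := Finset.prod_range_zero _

lemma poch_succ (x q : ℂ) (n : ℕ) : poch x q (n + 1) = poch x q n * (1 - x * q ^ n) :=
  Finset.prod_range_succ _ _

lemma norm_pow_lt_one {q : ℂ} (hq : ‖q‖ < 1) {j : ℕ} (hj : j ≠ 0) : ‖q ^ j‖ < 1 := by
  rw [norm_pow]
  exact pow_lt_one₀ (norm_nonneg q) hq hj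

lemma one_sub_pow_ne_zero {q : ℂ} (hq : ‖q‖ < 1) {j : ℕ} (hj : j ≠ 0) : 1 - q ^ j ≠ 0 :=
  sub_ne_zero.mpr fun h => by simpa [← h] using norm_pow_lt_one hq hj

lemma one_sub_mul_pow_ne_zero {x q : ℂ} (hx : ‖x‖ < 1) (hq : ‖q‖ ≤ 1) (k : ℕ) :
    1 - x * q ^ k ≠ 0 := by
  refine sub_ne_zero.mpr fun h => ?_
  have : ‖x * q ^ k‖ < 1 := by
    rw [norm_mul, norm_pow]
    exact (mul_le_of_le_one_right (norm_nonneg x) (pow_le_one₀ (norm_nonneg q) hq)).trans_lt hx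
  simp [← h] at this

lemma poch_ne_zero {x q : ℂ} (hx : ‖x‖ < 1) (hq : ‖q‖ ≤ 1) (n : ℕ) : poch x q n ≠ 0 :=
  Finset.prod_ne_zero_iff.mpr fun k _ => one_sub_mul_pow_ne_zero hx hq k

section Slater

variable (q : ℂ)

noncomputable def slaterAlpha (m : ℕ) : ℂ :=
  (-1 : ℂ) ^ m * q ^ (m * (m - 1)) * (1 - q ^ (4 * m + 2)) / (1 - q ^ 2)

noncomputable def slaterBeta (n : ℕ) : ℂ :=
  poch (-q) q n * q ^ (n * (n - 1) / 2) / poch (q ^ 2) q (2 * n)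

/-- The `r = 2m` term `F(n, m)`, set to zero for `2m > n` where `n - 2m` would truncate. -/
noncomputable def slaterSummand (n m : ℕ) : ℂ :=
  if 2 * m ≤ n then slaterAlpha q m / (poch q q (n - 2 * m) * poch (q ^ 3) q (n + 2 * m)) else 0

noncomputable def slaterStep (n : ℕ) : ℂ :=
  q ^ n / ((1 - q ^ (n + 1)) * (1 - q ^ (2 * n + 3)))

noncomputable def slaterCert (n m : ℕ) : ℂ :=
  -((1 - q ^ (2 * m)) * (1 - q ^ (n + 2 * m + 2)) * (1 - q ^ (n + 2 * m + 3))) /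
    ((1 - q ^ (4 * m + 2)) * (1 - q ^ (n + 1)) * (1 - q ^ (2 * n + 3)))

variable {q}

lemma slaterSummand_of_lt {n m : ℕ} (h : n < 2 * m) : slaterSummand q n m = 0 :=
  if_neg (by omega)

lemma slaterSummand_of_eq {n m k : ℕ} (h : n = 2 * m + k) :
    slaterSummand q n m = slaterAlpha q m / (poch q q k * poch (q ^ 3) q (4 * m + k)) := by
  rw [slaterSummand, if_pos (by omega), show n - 2 * m = k by omega,
    show n + 2 * m = 4 * m + k by omega]

lemma slaterAlpha_succ (hq : ‖q‖ < 1) (m : ℕ) :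
    slaterAlpha q (m + 1) =
      -q ^ (2 * m) * (1 - q ^ (4 * m + 6)) / (1 - q ^ (4 * m + 2)) * slaterAlpha q m := by
  have hexp : (m + 1) * (m + 1 - 1) = m * (m - 1) + 2 * m := by
    rcases m with _ | j
    · rfl
    · simp only [Nat.add_sub_cancel]; ring
  simp only [slaterAlpha, hexp]
  field_simp [one_sub_pow_ne_zero hq]
  ring

lemma slaterSummand_eq_mul_succ_left (hq : ‖q‖ < 1) (m k : ℕ) :
    slaterSummand q (2 * m + k) m =
      (1 - q ^ (k + 1)) * (1 - q ^ (4 * m + k + 3)) * slaterSummand q (2 * m + k + 1) m := by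
  rw [slaterSummand_of_eq rfl, slaterSummand_of_eq (k := k + 1) (by ring), ← add_assoc,
    poch_succ, poch_succ]
  have hq3 := norm_pow_lt_one hq three_ne_zero
  field_simp [poch_ne_zero hq hq.le, poch_ne_zero hq3 hq.le, one_sub_mul_pow_ne_zero hq hq.le,
    one_sub_mul_pow_ne_zero hq3 hq.le]
  ring

lemma slaterSummand_succ_right_eq_mul (hq : ‖q‖ < 1) (m k : ℕ) :
    slaterSummand q (2 * m + k + 1) (m + 1) =
      -q ^ (2 * m) * (1 - q ^ (4 * m + 6)) * (1 - q ^ k) * (1 - q ^ (k + 1)) /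
        ((1 - q ^ (4 * m + 2)) * (1 - q ^ (4 * m + k + 4)) * (1 - q ^ (4 * m + k + 5))) *
        slaterSummand q (2 * m + k + 1) m := by
  rcases k with _ | j
  · rw [slaterSummand_of_lt (by omega)]
    simp
  rw [slaterSummand_of_eq (k := j) (by ring), slaterSummand_of_eq (k := j + 1 + 1) (by ring),
    show 4 * (m + 1) + j = 4 * m + (j + 1 + 1) + 1 + 1 by ring, poch_succ, poch_succ, poch_succ,
    poch_succ, slaterAlpha_succ hq]
  have hq3 := norm_pow_lt_one hq three_ne_zero
  field_simp [poch_ne_zero hq hq.le, poch_ne_zero hq3 hq.le, one_sub_mul_pow_ne_zero hq hq.le,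
    one_sub_mul_pow_ne_zero hq3 hq.le, one_sub_pow_ne_zero hq]
  ring

lemma slaterCert_zero (n : ℕ) : slaterCert q n 0 = 0 := by simp [slaterCert]

lemma slaterCert_of_two_mul_eq (hq : ‖q‖ < 1) {n m : ℕ} (h : 2 * m = n + 1) :
    slaterCert q n m = -1 := by
  rw [slaterCert, show n + 2 * m + 2 = 2 * n + 3 by omega,
    show n + 2 * m + 3 = 4 * m + 2 by omega, h]
  field_simp [one_sub_pow_ne_zero hq]

lemma slaterSummand_wz (hq : ‖q‖ < 1) (n m : ℕ) :
    slaterSummand q (n + 1) m - slaterStep q n * slaterSummand q n m =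
      slaterCert q n (m + 1) * slaterSummand q (n + 1) (m + 1) -
        slaterCert q n m * slaterSummand q (n + 1) m := by
  obtain h | h | h : 2 * m ≤ n ∨ 2 * m = n + 1 ∨ n + 1 < 2 * m := by omega
  · obtain ⟨k, rfl⟩ := Nat.exists_eq_add_of_le h
    rw [slaterSummand_eq_mul_succ_left hq, slaterSummand_succ_right_eq_mul hq, slaterStep,
      slaterCert, slaterCert]
    field_simp [one_sub_pow_ne_zero hq]
    ring
  · rw [slaterSummand_of_lt (by omega : n < 2 * m),
      slaterSummand_of_lt (by omega : n + 1 < 2 * (m + 1)), slaterCert_of_two_mul_eq hq h]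
    ring
  · rw [slaterSummand_of_lt (by omega : n < 2 * m), slaterSummand_of_lt h,
      slaterSummand_of_lt (by omega : n + 1 < 2 * (m + 1))]
    ring

lemma sum_slaterSummand_succ (hq : ‖q‖ < 1) (n : ℕ) :
    ∑ m ∈ Finset.range (n + 1 + 1), slaterSummand q (n + 1) m =
      slaterStep q n * ∑ m ∈ Finset.range (n + 1), slaterSummand q n m := by
  rw [Finset.sum_congr rfl fun m _ => eq_add_of_sub_eq' (slaterSummand_wz hq n m),
    Finset.sum_add_distrib,
    Finset.sum_range_sub fun m => slaterCert q n m * slaterSummand q (n + 1) m,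
    ← Finset.mul_sum, Finset.sum_range_succ _ (n + 1),
    slaterSummand_of_lt (by omega : n < 2 * (n + 1)),
    slaterSummand_of_lt (by omega : n + 1 < 2 * (n + 1 + 1)), slaterCert_zero]
  ring

lemma slaterBeta_succ (hq : ‖q‖ < 1) (n : ℕ) :
    slaterBeta q (n + 1) = slaterStep q n * slaterBeta q n := by
  have hq2 := norm_pow_lt_one hq two_ne_zero
  have hneg : ‖-q‖ < 1 := by rwa [norm_neg]
  rw [slaterBeta, slaterBeta, slaterStep, Nat.triangle_succ,
    show 2 * (n + 1) = 2 * n + 1 + 1 by ring, poch_succ, poch_succ, poch_succ]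
  field_simp [poch_ne_zero hq2 hq.le, one_sub_mul_pow_ne_zero hq2 hq.le,
    one_sub_mul_pow_ne_zero hneg hq.le, one_sub_pow_ne_zero hq]
  ring

lemma sum_slaterSummand (hq : ‖q‖ < 1) (n : ℕ) :
    ∑ m ∈ Finset.range (n + 1), slaterSummand q n m = slaterBeta q n := by
  induction n with
  | zero =>
    simp [slaterSummand, slaterAlpha, slaterBeta, poch_zero,
      div_self (one_sub_pow_ne_zero hq two_ne_zero)]
  | succ n ih => rw [sum_slaterSummand_succ hq, ih, slaterBeta_succ hq]

lemma sum_div_poch_eq_sum_slaterSummand {α : ℕ → ℂ} (h0 : ∀ m, α (2 * m) = slaterAlpha q m)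
    (h1 : ∀ m, α (2 * m + 1) = 0) (n : ℕ) :
    ∑ r ∈ Finset.range (n + 1), α r / (poch q q (n - r) * poch (q ^ 3) q (n + r)) =
      ∑ m ∈ Finset.range (n + 1), slaterSummand q n m := by
  have supp {m : ℕ} (hm : slaterSummand q n m ≠ 0) : 2 * m ≤ n :=
    not_lt.mp fun h => hm (slaterSummand_of_lt h)
  symm
  refine Finset.sum_bij_ne_zero (fun m _ _ => 2 * m) (fun m _ hm => ?_)
    (fun _ _ _ _ _ _ h => by omega) (fun r hr hne => ?_) (fun m _ hm => ?_)
  · exact Finset.mem_range.mpr (Nat.lt_succ_of_le (supp hm))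
  · obtain ⟨m, rfl | rfl⟩ := Nat.even_or_odd' r
    · have hm : 2 * m ≤ n := Nat.le_of_lt_succ (Finset.mem_range.mp hr)
      exact ⟨m, Finset.mem_range.mpr (by omega), by rwa [slaterSummand, if_pos hm, ← h0], rfl⟩
    · simp [h1] at hne
  · rw [slaterSummand, if_pos (supp hm), h0]

end Slater

/-- A Bailey pair relative to `q²` derived from Slater's ₆ψ₆ summation. -/
theorem slater_bailey_pair_mod2 (q : ℂ) (hq : ‖q‖ < 1) (α : ℕ → ℂ)
    (h0 : ∀ m : ℕ, α (2 * m) =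
      (-1 : ℂ) ^ m * q ^ (m * (m - 1)) * (1 - q ^ (4 * m + 2)) / (1 - q ^ 2))
    (h1 : ∀ m : ℕ, α (2 * m + 1) = 0)
    (n : ℕ) :
    poch (-q) q n * q ^ (n * (n - 1) / 2) / poch (q ^ 2) q (2 * n) =
      ∑ r ∈ Finset.range (n + 1), α r / (poch q q (n - r) * poch (q ^ 3) q (n + r)) := by
  rw [sum_div_poch_eq_sum_slaterSummand h0 h1, sum_slaterSummand hq]
  rfl
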